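/- Let n ≥ 2. Let C be a clause over the variables of CR_n other than z, containing the literal ¬a_{n−1} and containing no variable of A ∪ B other than a_{n−1}. Let h : (Fin n → Fin n → Bool) → Bool be a function that does not depend on any variable x_{ij} with i ≠ n−1. Assume that for every total assignment (x : Fin n → Fin n → Bool, a : Fin n → Bool, b : Fin n → Bool) that falsifies every literal of C, the combined assignment together with z := h x falsifies some clause of the matrix of CR_n (i.e. every literal of that clause is falsified). Then either for every i ∈ Fin n with i ≠ n−1 the clause C contains some variable x_{ij} (for some j ∈ Fin n), or for every j ∈ Fin n the clause C contains some variable x_{ij} (for some i ∈ Fin n). -/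
import Mathlib


namespace CR

/-- The variables of the completion principle formula `CR_n`. -/
inductive CRVar (n : ℕ) where
  | x : Fin n → Fin n → CRVar n
  | z : CRVar n
  | a : Fin n → CRVar n
  | b : Fin n → CRVar n
deriving DecidableEq

/-- The total assignment determined by values for the `x`-, `z`-, `a`- and
`b`-variables. -/
def assign {n : ℕ} (xv : Fin n → Fin n → Bool) (zv : Bool)
    (av bv : Fin n → Bool) : CRVar n → Bool
  | .x i j => xv i j
  | .z => zv
  | .a i => av i
  | .b j => bv j

/-- Some clause of the matrix of `CR_n` is falsified: either some
`A_{ij} = {x_{ij}, z, a_i}`, or some `B_{ij} = {¬x_{ij}, ¬z, b_j}`, or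
`L_A = {¬a_0, …, ¬a_{n-1}}`, or `L_B = {¬b_0, …, ¬b_{n-1}}`. -/
def CRFalsified {n : ℕ} (xv : Fin n → Fin n → Bool) (zv : Bool)
    (av bv : Fin n → Bool) : Prop :=
  (∃ i j : Fin n, xv i j = false ∧ zv = false ∧ av i = false) ∨
  (∃ i j : Fin n, xv i j = true ∧ zv = true ∧ bv j = false) ∨
  (∀ i : Fin n, av i = true) ∨
  (∀ j : Fin n, bv j = true)

end CR

open CR in
/-- Let `n ≥ 2`, let `C` be a clause over the variables of
`CR_n` other than `z` containing the literal `¬a_{n-1}` and no variable of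
`A ∪ B` other than `a_{n-1}`, and let `h` be a function of the `x`-variables
not depending on any `x_{ij}` with `i ≠ n-1`.  If every total assignment
falsifying every literal of `C`, combined with `z := h x`, falsifies some
matrix clause of `CR_n`, then either `C` contains a variable `x_{ij}` for every
`i ≠ n-1`, or `C` contains a variable `x_{ij}` for every `j`. -/
theorem cr_wide_clause {n : ℕ} (hn : 2 ≤ n)
    (C : Finset (CRVar n × Bool))
    (hclause : ∀ v : CRVar n, ¬ ((v, true) ∈ C ∧ (v, false) ∈ C))
    (hnoz : ∀ p : Bool, (CRVar.z, p) ∉ C)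
    (hlast : (CRVar.a ⟨n - 1, by omega⟩, false) ∈ C)
    (hnoa : ∀ i : Fin n, i ≠ ⟨n - 1, by omega⟩ → ∀ p : Bool, (CRVar.a i, p) ∉ C)
    (hnob : ∀ (j : Fin n) (p : Bool), (CRVar.b j, p) ∉ C)
    (h : (Fin n → Fin n → Bool) → Bool)
    (hindep : ∀ i j : Fin n, i ≠ ⟨n - 1, by omega⟩ →
      ∀ xv xv' : Fin n → Fin n → Bool,
        (∀ i' j' : Fin n, (i', j') ≠ (i, j) → xv i' j' = xv' i' j') → h xv = h xv')
    (hfals : ∀ (xv : Fin n → Fin n → Bool) (av bv : Fin n → Bool),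
      (∀ l ∈ C, assign xv (h xv) av bv l.1 ≠ l.2) →
      CRFalsified xv (h xv) av bv) :
    (∀ i : Fin n, i ≠ ⟨n - 1, by omega⟩ → ∃ (j : Fin n) (p : Bool), (CRVar.x i j, p) ∈ C) ∨
    (∀ j : Fin n, ∃ (i : Fin n) (p : Bool), (CRVar.x i j, p) ∈ C) := by
  classical
  by_contra hcon
  push_neg at hcon
  obtain ⟨⟨i₀, hi₀, hnoi⟩, j₀, hnoj⟩ := hcon
  set last : Fin n := ⟨n - 1, by omega⟩ with hlastdef
  -- h depends only on row `last`
  have hrow : ∀ xv xv' : Fin n → Fin n → Bool,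
      (∀ j, xv last j = xv' last j) → h xv = h xv' := by
    intro xv xv' hag
    have key : ∀ l : List (Fin n × Fin n),
        h (fun i' j' => if (i', j') ∈ l then xv' i' j' else xv i' j') = h xv := by
      intro l
      induction l with
      | nil => simp
      | cons p l ih =>
        obtain ⟨i, j⟩ := p
        by_cases hp : (i, j) ∈ l
        · have heq : (fun i' j' => if (i', j') ∈ (i, j) :: l then xv' i' j' else xv i' j')
              = (fun i' j' => if (i', j') ∈ l then xv' i' j' else xv i' j') := by
            funext i' j'
            by_cases h' : (i', j') ∈ l
            · simp [h']
            · have hne : (i', j') ≠ (i, j) := fun he => h' (he ▸ hp)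
              simp [h', hne]
          rw [heq, ih]
        · by_cases hi : i = last
          · have heq : (fun i' j' => if (i', j') ∈ (i, j) :: l then xv' i' j' else xv i' j')
                = (fun i' j' => if (i', j') ∈ l then xv' i' j' else xv i' j') := by
              funext i' j'
              by_cases h' : (i', j') ∈ l
              · simp [h']
              · by_cases h'' : (i', j') = (i, j)
                · have hi' : i' = last := by
                    have := congrArg Prod.fst h''
                    simpa [hi] using this
                  have hxx : xv i' j' = xv' i' j' := by rw [hi']; exact hag j'
                  simp [h'', h', hxx]
                · simp [h', h'']
            rw [heq, ih]
          · rw [← ih]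
            apply hindep i j hi
            intro i' j' hne
            simp only [List.mem_cons, hne, false_or]
    have hL := key ((List.finRange n).product (List.finRange n))
    have hxv' : (fun i' j' => if (i', j') ∈ (List.finRange n).product (List.finRange n)
        then xv' i' j' else xv i' j') = xv' := by
      funext i' j'
      have : (i', j') ∈ (List.finRange n).product (List.finRange n) := by
        rw [List.pair_mem_product]
        exact ⟨List.mem_finRange _, List.mem_finRange _⟩
      simp [this]
    rw [hxv'] at hL
    exact hL.symm
  -- base assignment
  set b0 : Fin n → Fin n → Bool :=
    fun i j => decide ((CRVar.x i j, false) ∈ C) with hb0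
  have hb0C : ∀ (i j : Fin n) (p : Bool), (CRVar.x i j, p) ∈ C → b0 i j ≠ p := by
    intro i j p hmem
    cases p with
    | false => simp [hb0, hmem]
    | true =>
      have : (CRVar.x i j, false) ∉ C := fun hc => hclause _ ⟨hmem, hc⟩
      simp [hb0, this]
  -- falsifying C for an xv satisfying the forced-entry condition
  have hfalsC : ∀ (xv : Fin n → Fin n → Bool) (av bv : Fin n → Bool),
      (∀ (i j : Fin n) (p : Bool), (CRVar.x i j, p) ∈ C → xv i j ≠ p) →
      av last = true →
      (∀ l ∈ C, assign xv (h xv) av bv l.1 ≠ l.2) := by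
    intro xv av bv hx hav l hl
    obtain ⟨v, p⟩ := l
    cases v with
    | x i j => exact hx i j p hl
    | z => exact absurd hl (hnoz p)
    | a i =>
      by_cases hi : i = last
      · subst hi
        cases p with
        | false => simp [assign, hav]
        | true => exact absurd ⟨hl, hlast⟩ (hclause _)
      · exact absurd hl (hnoa i hi p)
    | b j => exact absurd hl (hnob j p)
  cases hz : h b0 with
  | false =>
    -- free entries in rows ≠ last set to true; row last matches b0
    set xv : Fin n → Fin n → Bool := fun i j =>
      if (CRVar.x i j, true) ∈ C then false
      else if (CRVar.x i j, false) ∈ C then true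
      else if i = last then false else true with hxv
    have hrowlast : ∀ j, xv last j = b0 last j := by
      intro j
      by_cases h1 : (CRVar.x last j, true) ∈ C
      · have h2 : (CRVar.x last j, false) ∉ C := fun hc => hclause _ ⟨h1, hc⟩
        simp [hxv, hb0, h1, h2]
      · by_cases h2 : (CRVar.x last j, false) ∈ C
        · simp [hxv, hb0, h1, h2]
        · simp [hxv, hb0, h1, h2]
    have hhxv : h xv = false := (hrow xv b0 hrowlast).trans hz
    have hxC : ∀ (i j : Fin n) (p : Bool), (CRVar.x i j, p) ∈ C → xv i j ≠ p := by
      intro i j p hmem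
      cases p with
      | true => simp [hxv, hmem]
      | false =>
        have h1 : (CRVar.x i j, true) ∉ C := fun hc => hclause _ ⟨hc, hmem⟩
        simp [hxv, h1, hmem]
    set av : Fin n → Bool := fun i => decide (i ≠ i₀) with hav
    set bv : Fin n → Bool := fun _ => false with hbv
    have havlast : av last = true := by
      simp [hav, (Ne.symm hi₀ : last ≠ i₀)]
    have := hfals xv av bv (hfalsC xv av bv hxC havlast)
    rw [hhxv] at this
    rcases this with ⟨i, j, h1, _, h3⟩ | ⟨_, _, _, h2, _⟩ | h3 | h4
    · have hii : i = i₀ := by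
        by_contra hne; simp [hav, hne] at h3
      rw [hii] at h1
      have h1' : (CRVar.x i₀ j, true) ∉ C := hnoi j true
      have h2' : (CRVar.x i₀ j, false) ∉ C := hnoi j false
      simp [hxv, h1', h2', hi₀] at h1
    · simp at h2
    · have := h3 i₀; simp [hav] at this
    · have := h4 ⟨0, by omega⟩; simp [hbv] at this
  | true =>
    set xv : Fin n → Fin n → Bool := b0 with hxv
    have hhxv : h xv = true := hz
    have hxC : ∀ (i j : Fin n) (p : Bool), (CRVar.x i j, p) ∈ C → xv i j ≠ p := hb0C
    set av : Fin n → Bool := fun i => decide (i = last) with hav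
    set bv : Fin n → Bool := fun j => decide (j ≠ j₀) with hbv
    have havlast : av last = true := by simp [hav]
    have := hfals xv av bv (hfalsC xv av bv hxC havlast)
    rw [hhxv] at this
    rcases this with ⟨_, _, _, h2, _⟩ | ⟨i, j, h1, _, h3⟩ | h3 | h4
    · simp at h2
    · have hjj : j = j₀ := by
        by_contra hne; simp [hbv, hne] at h3
      rw [hjj] at h1
      have h2' : (CRVar.x i j₀, false) ∉ C := hnoj i false
      rw [hb0] at h1
      simp [h2'] at h1
    · have := h3 i₀; simp [hav, hi₀] at this
    · have := h4 j₀; simp [hbv] at this
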